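/- Let f be proper convex lsc on ℝ^n with unique minimizer x⋆, and suppose ∂f^{-1} is locally Lipschitz at 0 with constant a: there exists r > 0 such that ‖w‖ ≤ r and x ∈ ∂f^{-1}(w) imply ‖x − x⋆‖ ≤ a‖w‖. Fix μ > 0 and let γ = a/√(a² + μ^{-2}) < 1. Consider the inexact proximal point iteration ỹ_{k+1} = argmin_x f(x) + (μ/2)‖x−y_k‖², with y_{k+1} satisfying ‖y_{k+1} − ỹ_{k+1}‖ ≤ (γ/2)^k. Then there exist k₀ and constant C such that ‖y_k − x⋆‖ ≤ C γ^k for all k ≥ k₀; i.e., (y_k) converges linearly to x⋆ with rate γ. -/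

import Mathlib

/-!
The exact prox step `p = P(y)` satisfies `μ (y - p) ∈ ∂f p`, and testing this subgradient
against the minimizer `x⋆` gives `‖p - x⋆‖² + ‖y - p‖² ≤ ‖y - x⋆‖²`. With summable errors this
forces `‖y_k - x⋆‖` to converge, hence the residuals `‖y_k - p_k‖` tend to `0`. Once
`μ ‖y_k - p_k‖ ≤ r`, the local Lipschitz bound `‖p - x⋆‖ ≤ a μ ‖y - p‖` together with the
inequality above yields `‖p - x⋆‖ ≤ γ ‖y - x⋆‖`, so `d_{k+1} ≤ γ d_k + (γ/2)^k`, and dividing by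
`γ^(k+1)` shows `d_k = O(γ^k)`.
-/

open scoped RealInnerProductSpace
open Filter Topology

theorem antitone_add_tsum_nat_add {d ε : ℕ → ℝ} (hε : Summable ε)
    (h : ∀ k, d (k + 1) ≤ d k + ε k) : Antitone fun k => d k + ∑' i, ε (i + k) := by
  refine antitone_nat_of_succ_le fun k => ?_
  have htail : ∑' i, ε (i + k) = ε k + ∑' i, ε (i + (k + 1)) := by
    rw [((summable_nat_add_iff k).2 hε).tsum_eq_zero_add]
    simp only [zero_add, add_right_comm _ 1 k, add_assoc]
  linarith [h k]

theorem exists_tendsto_of_le_add_of_summable {d ε : ℕ → ℝ} (hd : ∀ k, 0 ≤ d k)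
    (hε₀ : ∀ k, 0 ≤ ε k) (hε : Summable ε) (h : ∀ k, d (k + 1) ≤ d k + ε k) :
    ∃ L, Tendsto d atTop (𝓝 L) := by
  set u := fun k => d k + ∑' i, ε (i + k)
  have hbdd : BddBelow (Set.range u) :=
    ⟨0, by rintro _ ⟨k, rfl⟩; exact add_nonneg (hd k) (tsum_nonneg fun i => hε₀ _)⟩
  have hu := tendsto_atTop_ciInf (antitone_add_tsum_nat_add hε h) hbdd
  refine ⟨⨅ k, u k, ?_⟩
  simpa [u] using hu.sub (tendsto_sum_nat_add ε)

theorem tendsto_zero_of_sq_add_sq_le_of_le_add {d p e ε : ℕ → ℝ} (hd : ∀ k, 0 ≤ d k)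
    (hp : ∀ k, 0 ≤ p k) (he : ∀ k, 0 ≤ e k) (hpe : ∀ k, p k ^ 2 + e k ^ 2 ≤ d k ^ 2)
    (hε₀ : ∀ k, 0 ≤ ε k) (hε : Summable ε) (hstep : ∀ k, d (k + 1) ≤ p k + ε k) :
    Tendsto e atTop (𝓝 0) := by
  have hpd : ∀ k, p k ≤ d k := fun k =>
    (pow_le_pow_iff_left₀ (hp k) (hd k) two_ne_zero).1 (by nlinarith [hpe k, sq_nonneg (e k)])
  obtain ⟨L, hdL⟩ := exists_tendsto_of_le_add_of_summable hd hε₀ hε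
    fun k => (hstep k).trans (by linarith [hpd k])
  have hpL : Tendsto p atTop (𝓝 L) := by
    have hlow : Tendsto (fun k => d (k + 1) - ε k) atTop (𝓝 (L - 0)) :=
      (hdL.comp (tendsto_add_atTop_nat 1)).sub hε.tendsto_atTop_zero
    rw [sub_zero] at hlow
    exact tendsto_of_tendsto_of_tendsto_of_le_of_le hlow hdL
      (fun k => by linarith [hstep k]) hpd
  have he2 : Tendsto (fun k => e k ^ 2) atTop (𝓝 0) := by
    have hgap : Tendsto (fun k => d k ^ 2 - p k ^ 2) atTop (𝓝 (L ^ 2 - L ^ 2)) :=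
      (hdL.pow 2).sub (hpL.pow 2)
    rw [sub_self] at hgap
    exact squeeze_zero (fun k => sq_nonneg _) (fun k => by linarith [hpe k]) hgap
  simpa [Real.sqrt_sq (he _)] using he2.sqrt

theorem exists_le_mul_pow_of_eventually_le {d : ℕ → ℝ} {γ : ℝ} (hd : ∀ k, 0 ≤ d k)
    (hγ : 0 ≤ γ) (h : ∀ᶠ k in atTop, d (k + 1) ≤ γ * d k + (γ / 2) ^ k) :
    ∃ C, 0 ≤ C ∧ ∀ᶠ k in atTop, d k ≤ C * γ ^ k := by
  obtain ⟨K, hK⟩ := eventually_atTop.1 h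
  rcases hγ.eq_or_lt with rfl | hγ
  · refine ⟨0, le_rfl, eventually_atTop.2 ⟨K + 2, fun k hk => ?_⟩⟩
    obtain ⟨j, rfl⟩ : ∃ j, k = j + 1 := ⟨k - 1, by omega⟩
    have := hK j (by omega)
    rw [zero_div, zero_pow (by omega)] at this
    simpa using this
  -- `d k / γ ^ k` increases by at most `2⁻¹ ^ k / γ` per step from `K` on
  set v := fun m => d (m + K) / γ ^ (m + K)
  set ε := fun m : ℕ => (2⁻¹ : ℝ) ^ (m + K) / γ
  have hε : Summable ε := (summable_nat_add_iff K).2 <|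
    (summable_geometric_of_lt_one (by norm_num) (by norm_num : (2⁻¹ : ℝ) < 1)).div_const γ
  have hv : ∀ m, v (m + 1) ≤ v m + ε m := by
    intro m
    have hstep := hK (m + K) (by omega)
    simp only [v, ε, add_right_comm m 1 K]
    rw [div_le_iff₀ (by positivity)]
    calc d (m + K + 1) ≤ γ * d (m + K) + (γ / 2) ^ (m + K) := hstep
      _ = (d (m + K) / γ ^ (m + K) + 2⁻¹ ^ (m + K) / γ) * γ ^ (m + K + 1) := by
        field_simp
        ring
  have hC : 0 ≤ v 0 + ∑' i, ε (i + 0) :=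
    add_nonneg (div_nonneg (hd _) (by positivity)) (tsum_nonneg fun i => by positivity)
  refine ⟨v 0 + ∑' i, ε (i + 0), hC, eventually_atTop.2 ⟨K, fun k hk => ?_⟩⟩
  obtain ⟨m, rfl⟩ : ∃ m, k = m + K := ⟨k - K, by omega⟩
  have hvm : v m ≤ v 0 + ∑' i, ε (i + 0) :=
    (le_add_of_nonneg_right (tsum_nonneg fun i => by positivity)).trans
      (antitone_add_tsum_nat_add hε hv (Nat.zero_le m))
  rwa [div_le_iff₀ (by positivity)] at hvm

theorem le_of_forall_le_add_mul {b c K : ℝ} (h : ∀ t ∈ Set.Ioc (0 : ℝ) 1, b ≤ c + t * K) :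
    b ≤ c := by
  have hlim : Tendsto (fun t : ℝ => c + t * K) (𝓝[>] 0) (𝓝 c) := by
    have : Continuous fun t : ℝ => c + t * K := by fun_prop
    simpa using (this.tendsto 0).mono_left nhdsWithin_le_nhds
  exact ge_of_tendsto hlim (eventually_of_mem (Ioc_mem_nhdsGT one_pos) h)

section Subgradient

variable {E : Type*} [NormedAddCommGroup E] {f : E → EReal}

theorem ne_top_of_isMinOn_prox {μ : ℝ} {y p x : E}
    (hmin : IsMinOn (fun x => f x + ((μ / 2 * ‖x - y‖ ^ 2 : ℝ) : EReal)) Set.univ p)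
    (hx : f x ≠ ⊤) : f p ≠ ⊤ := by
  have hle := isMinOn_iff.1 hmin x (Set.mem_univ x)
  have hlt : f x + ((μ / 2 * ‖x - y‖ ^ 2 : ℝ) : EReal) < ⊤ :=
    EReal.add_lt_top hx (EReal.coe_ne_top _)
  intro hp
  simp [hp] at hle
  exact hlt.ne (top_le_iff.1 hle)

variable [InnerProductSpace ℝ E]

def HasSubgradientAt (f : E → EReal) (w x : E) : Prop :=
  ∀ z, f x + ((⟪w, z - x⟫ : ℝ) : EReal) ≤ f z

theorem le_of_convex_epigraph (hconv : Convex ℝ {p : E × ℝ | f p.1 ≤ (p.2 : EReal)})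
    {x z : E} {b c t : ℝ} (hx : f x ≤ b) (hz : f z ≤ c) (ht₀ : 0 ≤ t) (ht₁ : t ≤ 1) :
    f (x + t • (z - x)) ≤ ((1 - t) * b + t * c : ℝ) := by
  have hmem := hconv (x := (x, b)) (y := (z, c)) hx hz (sub_nonneg.2 ht₁) ht₀ (by ring)
  have hpt : (1 - t) • x + t • z = x + t • (z - x) := by module
  simpa [hpt] using hmem

theorem hasSubgradientAt_of_isMinOn_prox (hconv : Convex ℝ {p : E × ℝ | f p.1 ≤ (p.2 : EReal)})
    (hbot : ∀ x, f x ≠ ⊥) {μ : ℝ} {y p : E}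
    (hmin : IsMinOn (fun x => f x + ((μ / 2 * ‖x - y‖ ^ 2 : ℝ) : EReal)) Set.univ p)
    (hp : f p ≠ ⊤) : HasSubgradientAt f (μ • (y - p)) p := by
  intro z
  rcases eq_or_ne (f z) ⊤ with hz | hz
  · simp [hz]
  obtain ⟨b, hb⟩ : ∃ b : ℝ, f p = b := ⟨_, (EReal.coe_toReal hp (hbot p)).symm⟩
  obtain ⟨c, hc⟩ : ∃ c : ℝ, f z = c := ⟨_, (EReal.coe_toReal hz (hbot z)).symm⟩
  rw [hb, hc, ← EReal.coe_add, EReal.coe_le_coe_iff, real_inner_smul_left]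
  set I := ⟪p - y, z - p⟫
  set N := ‖z - p‖ ^ 2
  have hI : ⟪y - p, z - p⟫ = -I := by rw [← inner_neg_left, neg_sub]
  rw [hI]
  -- compare `p` with the point `p + t • (z - p)` of the segment towards `z`, then let `t → 0`
  refine le_of_forall_le_add_mul (K := μ / 2 * N) fun t ⟨ht₀, ht₁⟩ => ?_
  have hconvt := le_of_convex_epigraph hconv hb.le hc.le ht₀.le ht₁
  have hmint := isMinOn_iff.1 hmin (p + t • (z - p)) (Set.mem_univ _)
  simp only [hb] at hmint
  have hreal : b + μ / 2 * ‖p - y‖ ^ 2 ≤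
      (1 - t) * b + t * c + μ / 2 * ‖p + t • (z - p) - y‖ ^ 2 := by
    rw [← EReal.coe_le_coe_iff]
    push_cast
    exact hmint.trans (add_le_add_left hconvt _)
  have hexp : ‖p + t • (z - p) - y‖ ^ 2 = ‖p - y‖ ^ 2 + 2 * (t * I) + t ^ 2 * N := by
    rw [show p + t • (z - p) - y = (p - y) + t • (z - p) by abel, norm_add_sq_real,
      real_inner_smul_right, norm_smul, Real.norm_eq_abs, abs_of_pos ht₀]
    ring
  rw [hexp] at hreal
  have : t * (b + μ * -I) ≤ t * (c + t * (μ / 2 * N)) := by nlinarith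
  exact le_of_mul_le_mul_left this ht₀

theorem HasSubgradientAt.inner_nonneg_of_isMinOn {w p x : E} (h : HasSubgradientAt f w p)
    (hp : f p ≠ ⊤) (hp' : f p ≠ ⊥) (hx : IsMinOn f Set.univ x) : 0 ≤ ⟪w, p - x⟫ := by
  obtain ⟨b, hb⟩ : ∃ b : ℝ, f p = b := ⟨_, (EReal.coe_toReal hp hp').symm⟩
  have hle := (h x).trans (isMinOn_iff.1 hx p (Set.mem_univ p))
  rw [hb, ← EReal.coe_add, EReal.coe_le_coe_iff, ← neg_sub, inner_neg_right] at hle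
  linarith

theorem sq_add_sq_le_of_hasSubgradientAt_prox {μ : ℝ} (hμ : 0 < μ) {y p x : E}
    (h : HasSubgradientAt f (μ • (y - p)) p) (hp : f p ≠ ⊤) (hp' : f p ≠ ⊥)
    (hx : IsMinOn f Set.univ x) : ‖p - x‖ ^ 2 + ‖y - p‖ ^ 2 ≤ ‖y - x‖ ^ 2 := by
  have hinner := h.inner_nonneg_of_isMinOn hp hp' hx
  rw [real_inner_smul_left] at hinner
  have := nonneg_of_mul_nonneg_right hinner hμ
  rw [show y - x = (y - p) + (p - x) by abel, norm_add_sq_real]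
  linarith

end Subgradient

theorem div_sqrt_sq_add_inv_sq_lt_one {a μ : ℝ} (ha : 0 ≤ a) (hμ : μ ≠ 0) :
    a / √(a ^ 2 + (μ ^ 2)⁻¹) < 1 := by
  have hμ' : 0 < (μ ^ 2)⁻¹ := by positivity
  rw [div_lt_one (Real.sqrt_pos.2 (by positivity)), Real.lt_sqrt ha]
  linarith

theorem le_div_sqrt_mul_of_sq_add_sq_le {a μ s e d : ℝ} (ha : 0 ≤ a) (hμ : 0 < μ) (hs : 0 ≤ s)
    (hd : 0 ≤ d) (hsed : s ^ 2 + e ^ 2 ≤ d ^ 2) (hse : s ≤ a * (μ * e)) :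
    s ≤ a / √(a ^ 2 + (μ ^ 2)⁻¹) * d := by
  have hX : 0 < a ^ 2 + (μ ^ 2)⁻¹ := by positivity
  rw [div_mul_eq_mul_div, le_div_iff₀ (Real.sqrt_pos.2 hX)]
  refine (pow_le_pow_iff_left₀ (by positivity) (by positivity) two_ne_zero).1 ?_
  have hse2 : s ^ 2 ≤ (a * (μ * e)) ^ 2 := pow_le_pow_left₀ hs hse 2
  have hs2 : s ^ 2 * (μ ^ 2)⁻¹ ≤ a ^ 2 * e ^ 2 := by
    rw [← div_eq_mul_inv, div_le_iff₀ (by positivity)]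
    linarith
  rw [mul_pow, Real.sq_sqrt hX.le, mul_pow]
  nlinarith [sq_nonneg a]

theorem inexact_proximal_point_linear_rate_general {n : ℕ} (f : EuclideanSpace ℝ (Fin n) → EReal)
    (hconv : Convex ℝ {p : EuclideanSpace ℝ (Fin n) × ℝ | f p.1 ≤ (p.2 : EReal)})
    (hbot : ∀ x, f x ≠ ⊥)
    (xstar : EuclideanSpace ℝ (Fin n)) (hxs : IsMinOn f Set.univ xstar)
    (hxs_ne_top : f xstar ≠ ⊤)
    (a : ℝ) (ha : 0 ≤ a)
    (hlip : ∃ r > (0 : ℝ), ∀ (w x : EuclideanSpace ℝ (Fin n)), ‖w‖ ≤ r →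
        (∀ z, f x + ((⟪w, z - x⟫ : ℝ) : EReal) ≤ f z) → ‖x - xstar‖ ≤ a * ‖w‖)
    (μ : ℝ) (hμ : 0 < μ)
    (y ty : ℕ → EuclideanSpace ℝ (Fin n))
    (hty : ∀ k, IsMinOn (fun x => f x + ((μ / 2 * ‖x - y k‖ ^ 2 : ℝ) : EReal))
        Set.univ (ty k))
    (hyk : ∀ k, ‖y (k + 1) - ty k‖ ≤ (a / Real.sqrt (a ^ 2 + (μ ^ 2)⁻¹) / 2) ^ k) :
    ∃ (k₀ : ℕ) (C : ℝ), 0 ≤ C ∧ ∀ k ≥ k₀,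
      ‖y k - xstar‖ ≤ C * (a / Real.sqrt (a ^ 2 + (μ ^ 2)⁻¹)) ^ k := by
  obtain ⟨r, hr, hlip⟩ := hlip
  set γ := a / √(a ^ 2 + (μ ^ 2)⁻¹)
  have hγ₀ : 0 ≤ γ := by positivity
  have hγ₁ : γ < 1 := div_sqrt_sq_add_inv_sq_lt_one ha hμ.ne'
  have hfin k : f (ty k) ≠ ⊤ := ne_top_of_isMinOn_prox (hty k) hxs_ne_top
  have hsub k : HasSubgradientAt f (μ • (y k - ty k)) (ty k) :=
    hasSubgradientAt_of_isMinOn_prox hconv hbot (hty k) (hfin k)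
  have hfirm k : ‖ty k - xstar‖ ^ 2 + ‖y k - ty k‖ ^ 2 ≤ ‖y k - xstar‖ ^ 2 :=
    sq_add_sq_le_of_hasSubgradientAt_prox hμ (hsub k) (hfin k) (hbot _) hxs
  have hstep k : ‖y (k + 1) - xstar‖ ≤ ‖ty k - xstar‖ + (γ / 2) ^ k :=
    (norm_sub_le_norm_sub_add_norm_sub _ (ty k) _).trans (by linarith [hyk k])
  have hres : Tendsto (fun k => ‖y k - ty k‖) atTop (𝓝 0) :=
    tendsto_zero_of_sq_add_sq_le_of_le_add (fun _ => norm_nonneg _) (fun _ => norm_nonneg _)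
      (fun _ => norm_nonneg _) hfirm (fun _ => by positivity)
      (summable_geometric_of_lt_one (by positivity) (by linarith)) hstep
  have hcontr : ∀ᶠ k in atTop, ‖y (k + 1) - xstar‖ ≤ γ * ‖y k - xstar‖ + (γ / 2) ^ k := by
    filter_upwards [hres.eventually (eventually_le_nhds (div_pos hr hμ))] with k hk
    have hw : ‖μ • (y k - ty k)‖ = μ * ‖y k - ty k‖ := by
      rw [norm_smul, Real.norm_of_nonneg hμ.le]
    have hloc := hlip _ _ (hw ▸ (le_div_iff₀' hμ).1 hk) (hsub k)
    rw [hw] at hloc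
    linarith [hstep k, le_div_sqrt_mul_of_sq_add_sq_le ha hμ (norm_nonneg _) (norm_nonneg _)
      (hfirm k) hloc]
  obtain ⟨C, hC, hrate⟩ := exists_le_mul_pow_of_eventually_le
    (d := fun k => ‖y k - xstar‖) (fun _ => norm_nonneg _) hγ₀ hcontr
  obtain ⟨k₀, hk₀⟩ := eventually_atTop.1 hrate
  exact ⟨k₀, C, hC, hk₀⟩

/-- Local linear convergence of the inexact proximal point method under the
local Lipschitz condition on `(∂f)⁻¹` at `0`: with `γ = a/√(a² + μ⁻²)`, if
`‖y_{k+1} - ỹ_{k+1}‖ ≤ (γ/2)^k`, then `‖y_k - x⋆‖ ≤ C γ^k` for all large `k`. -/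
theorem inexact_proximal_point_linear_rate {n : ℕ} (f : EuclideanSpace ℝ (Fin n) → EReal)
    (hconv : Convex ℝ {p : EuclideanSpace ℝ (Fin n) × ℝ | f p.1 ≤ (p.2 : EReal)})
    (hlsc : LowerSemicontinuous f)
    (hbot : ∀ x, f x ≠ ⊥)
    (xstar : EuclideanSpace ℝ (Fin n)) (hxs : IsMinOn f Set.univ xstar)
    (hxs_ne_top : f xstar ≠ ⊤)
    (huniq : ∀ x, IsMinOn f Set.univ x → x = xstar)
    (a : ℝ) (ha : 0 ≤ a)
    (hlip : ∃ r > (0 : ℝ), ∀ (w x : EuclideanSpace ℝ (Fin n)), ‖w‖ ≤ r →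
        (∀ z, f x + ((⟪w, z - x⟫ : ℝ) : EReal) ≤ f z) → ‖x - xstar‖ ≤ a * ‖w‖)
    (μ : ℝ) (hμ : 0 < μ)
    (y ty : ℕ → EuclideanSpace ℝ (Fin n))
    (hty : ∀ k, IsMinOn (fun x => f x + ((μ / 2 * ‖x - y k‖ ^ 2 : ℝ) : EReal))
        Set.univ (ty k))
    (hyk : ∀ k, ‖y (k + 1) - ty k‖ ≤ (a / Real.sqrt (a ^ 2 + (μ ^ 2)⁻¹) / 2) ^ k) :
    ∃ (k₀ : ℕ) (C : ℝ), 0 ≤ C ∧ ∀ k ≥ k₀,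
      ‖y k - xstar‖ ≤ C * (a / Real.sqrt (a ^ 2 + (μ ^ 2)⁻¹)) ^ k :=
  inexact_proximal_point_linear_rate_general f hconv hbot xstar hxs hxs_ne_top a ha hlip μ hμ y ty
    hty hyk
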